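/- Let 0 < q < 1. On ℓ²(ℤ≥0), with S the shift, C₂ e_k = √(1−q^{2k}) e_k, and D e_k = q^k e_k, the operators t₁₁ = S*C₂, t₁₂ = −q e^{−iφ} D, t₂₁ = e^{iφ} D, t₂₂ = C₂S satisfy the ℂ[SL₂]_q relations: t₁₁t₂₁ = q t₂₁t₁₁, t₁₁t₁₂ = q t₁₂t₁₁, t₁₂t₂₁ = t₂₁t₁₂, t₂₂t₂₁ = q^{-1} t₂₁t₂₂, t₂₂t₁₂ = q^{-1} t₁₂t₂₂, t₁₁t₂₂ − t₂₂t₁₁ = (q − q^{-1}) t₁₂t₂₁, and t₁₁t₂₂ − q t₁₂t₂₁ = I. -/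

import Mathlib

/-!
All four generators act on the basis `e k` as weighted shifts: `t₁₁` lowers and `t₂₂` raises the
index with weight `√(1 - q^(2(k+1)))`, while `t₁₂` and `t₂₁` are diagonal with eigenvalues
proportional to `q^k`. Moving a diagonal operator with geometric eigenvalues past a shift therefore
costs exactly a factor `q`, which gives the four `q`-commutation relations. The two remaining
relations reduce to the quantum determinant identities `t₁₁ t₂₂ + q² D² = 1` and
`t₂₂ t₁₁ + D² = 1`, i.e. to `(1 - q^(2k)) + q^(2k) = 1` on each `e k`. Bounded operators agreeing
on the basis are equal.
-/

noncomputable section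
open ContinuousLinearMap Complex

abbrev H : Type := lp (fun _ : ℕ => ℂ) 2
def e (k : ℕ) : H := lp.single 2 k 1

lemma ext_e {T T' : H →L[ℂ] H} (h : ∀ k, T (e k) = T' (e k)) : T = T' :=
  lp.ext_continuousLinearMap ENNReal.ofNat_ne_top fun k => ContinuousLinearMap.ext_ring (h k)

lemma e_apply (m k : ℕ) : (e m : ℕ → ℂ) k = if k = m then 1 else 0 := by
  simp [e, lp.single_apply, Pi.single_apply]

lemma inner_e_left (k : ℕ) (f : H) : inner ℂ (e k) f = f k := by
  simp [e, lp.inner_single_left]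

lemma adjoint_shift_apply_e_succ {S : H →L[ℂ] H} (hS : ∀ k, S (e k) = e (k + 1)) (m : ℕ) :
    adjoint S (e (m + 1)) = e m := by
  ext k
  rw [← inner_e_left, adjoint_inner_right, hS, inner_e_left, e_apply, e_apply]
  simp

section WeightedShift

variable {T A : H →L[ℂ] H} {w a : ℕ → ℂ} {c : ℂ}

lemma backward_shift_mul_diagonal (hT₀ : T (e 0) = 0) (hT : ∀ k, T (e (k + 1)) = w k • e k)
    (hA : ∀ k, A (e k) = a k • e k) (ha : ∀ k, a (k + 1) = c * a k) :
    T * A = c • (A * T) := by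
  refine ext_e fun k => ?_
  cases k with
  | zero => simp [hA, hT₀]
  | succ k =>
    simp only [mul_apply_eq_comp, smul_apply, map_smul, hA, hT, ha, smul_smul]
    congr 1; ring

lemma diagonal_mul_forward_shift (hT : ∀ k, T (e k) = w k • e (k + 1))
    (hA : ∀ k, A (e k) = a k • e k) (ha : ∀ k, a (k + 1) = c * a k) :
    A * T = c • (T * A) := by
  refine ext_e fun k => ?_
  simp only [mul_apply_eq_comp, smul_apply, map_smul, hA, hT, ha, smul_smul]
  congr 1; ring

end WeightedShift

lemma ofReal_sqrt_mul_self {x : ℝ} (hx : 0 ≤ x) : (√x : ℂ) * √x = x := by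
  rw [← ofReal_mul, Real.mul_self_sqrt hx]

section Representation

variable {q : ℝ} {S C2 D : H →L[ℂ] H}

lemma adjoint_mul_C2_mul_C2_mul_add_smul_D_mul_D (hq₀ : 0 ≤ q) (hq₁ : q ≤ 1)
    (hS : ∀ k, S (e k) = e (k + 1))
    (hC2 : ∀ k, C2 (e k) = ((Real.sqrt (1 - q ^ (2 * k)) : ℝ) : ℂ) • e k)
    (hD : ∀ k, D (e k) = ((q ^ k : ℝ) : ℂ) • e k) :
    adjoint S * C2 * (C2 * S) + ((q : ℂ) ^ 2) • (D * D) = 1 := by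
  refine ext_e fun k => ?_
  have hsq := ofReal_sqrt_mul_self (sub_nonneg.2 (pow_le_one₀ hq₀ hq₁ (n := 2 * (k + 1))))
  simp only [add_apply, mul_apply_eq_comp, smul_apply, one_apply_eq_self, hS, hC2, hD, map_smul,
    adjoint_shift_apply_e_succ hS, smul_smul, ← add_smul]
  convert one_smul ℂ (e k) using 2
  rw [hsq]
  push_cast
  ring

lemma C2_mul_mul_adjoint_mul_C2_add_D_mul_D (hq₀ : 0 ≤ q) (hq₁ : q ≤ 1)
    (hS : ∀ k, S (e k) = e (k + 1))
    (hC2 : ∀ k, C2 (e k) = ((Real.sqrt (1 - q ^ (2 * k)) : ℝ) : ℂ) • e k)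
    (hD : ∀ k, D (e k) = ((q ^ k : ℝ) : ℂ) • e k) :
    C2 * S * (adjoint S * C2) + D * D = 1 := by
  refine ext_e fun k => ?_
  cases k with
  | zero => simp [hC2, hD]
  | succ k =>
    have hsq := ofReal_sqrt_mul_self (sub_nonneg.2 (pow_le_one₀ hq₀ hq₁ (n := 2 * (k + 1))))
    simp only [add_apply, mul_apply_eq_comp, one_apply_eq_self, hS, hC2, hD, map_smul,
      adjoint_shift_apply_e_succ hS, smul_smul, ← add_smul]
    convert one_smul ℂ (e (k + 1)) using 2
    rw [hsq]
    push_cast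
    ring

lemma adjoint_mul_C2_mul_D (hS : ∀ k, S (e k) = e (k + 1))
    (hC2 : ∀ k, C2 (e k) = ((Real.sqrt (1 - q ^ (2 * k)) : ℝ) : ℂ) • e k)
    (hD : ∀ k, D (e k) = ((q ^ k : ℝ) : ℂ) • e k) :
    adjoint S * C2 * D = (q : ℂ) • (D * (adjoint S * C2)) := by
  refine backward_shift_mul_diagonal (w := fun k => Real.sqrt (1 - q ^ (2 * (k + 1)))) ?_ ?_ hD ?_
  · simp [hC2]
  · intro k
    simp only [mul_apply_eq_comp, hC2, map_smul, adjoint_shift_apply_e_succ hS]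
  · intro k; push_cast; ring

lemma D_mul_C2_mul (hS : ∀ k, S (e k) = e (k + 1))
    (hC2 : ∀ k, C2 (e k) = ((Real.sqrt (1 - q ^ (2 * k)) : ℝ) : ℂ) • e k)
    (hD : ∀ k, D (e k) = ((q ^ k : ℝ) : ℂ) • e k) :
    D * (C2 * S) = (q : ℂ) • (C2 * S * D) := by
  refine diagonal_mul_forward_shift (w := fun k => Real.sqrt (1 - q ^ (2 * (k + 1)))) ?_ hD ?_
  · simp [hS, hC2]
  · intro k; push_cast; ring

end Representation

theorem stmt10 (q : ℝ) (hq : 0 < q) (hq1 : q < 1) (φ : ℝ)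
    (S C2 D : H →L[ℂ] H)
    (hS : ∀ k, S (e k) = e (k + 1))
    (hC2 : ∀ k, C2 (e k) = ((Real.sqrt (1 - q ^ (2 * k)) : ℝ) : ℂ) • e k)
    (hD : ∀ k, D (e k) = ((q ^ k : ℝ) : ℂ) • e k)
    (t11 t12 t21 t22 : H →L[ℂ] H)
    (h11 : t11 = adjoint S * C2)
    (h12 : t12 = (-(q : ℂ) * Complex.exp (-(φ * Complex.I))) • D)
    (h21 : t21 = Complex.exp (φ * Complex.I) • D)
    (h22 : t22 = C2 * S) :
    t11 * t21 = (q : ℂ) • (t21 * t11)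
    ∧ t11 * t12 = (q : ℂ) • (t12 * t11)
    ∧ t12 * t21 = t21 * t12
    ∧ t22 * t21 = ((q : ℂ)⁻¹) • (t21 * t22)
    ∧ t22 * t12 = ((q : ℂ)⁻¹) • (t12 * t22)
    ∧ t11 * t22 - t22 * t11 = ((q : ℂ) - (q : ℂ)⁻¹) • (t12 * t21)
    ∧ t11 * t22 - (q : ℂ) • (t12 * t21) = (1 : H →L[ℂ] H) := by
  have hq0 : (q : ℂ) ≠ 0 := by exact_mod_cast hq.ne'
  have h11D := adjoint_mul_C2_mul_D hS hC2 hD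
  have hD22 := D_mul_C2_mul hS hC2 hD
  have hdet := adjoint_mul_C2_mul_C2_mul_add_smul_D_mul_D hq.le hq1.le hS hC2 hD
  have hdet' := C2_mul_mul_adjoint_mul_C2_add_D_mul_D hq.le hq1.le hS hC2 hD
  have h1221 : t12 * t21 = (-(q : ℂ)) • (D * D) := by
    rw [h12, h21, smul_mul_smul_comm, mul_assoc, ← Complex.exp_add]
    simp
  subst h11 h12 h21 h22
  refine ⟨?_, ?_, ?_, ?_, ?_, ?_, ?_⟩
  · rw [mul_smul_comm, smul_mul_assoc, h11D, smul_comm]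
  · rw [mul_smul_comm, smul_mul_assoc, h11D, smul_comm]
  · rw [smul_mul_smul_comm, smul_mul_smul_comm, mul_comm]
  · rw [mul_smul_comm, smul_mul_assoc, hD22, smul_comm _ (q : ℂ), inv_smul_smul₀ hq0]
  · rw [mul_smul_comm, smul_mul_assoc, hD22, smul_comm _ (q : ℂ), inv_smul_smul₀ hq0]
  · rw [h1221, smul_smul, show ((q : ℂ) - (q : ℂ)⁻¹) * -q = 1 - q ^ 2 by field_simp; ring]
    linear_combination (norm := module) hdet - hdet'
  · rw [h1221]
    linear_combination (norm := module) hdet
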